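/- The change of variables (x_1, ..., x_h) ↦ (W_1, ..., W_{h-1}, S), where W_i = (∑_{j≤i} x_j)/(∑_{j≤i+1} x_j) and S = ∑_{j=1}^h x_j, mapping (0,∞)^h to (0,1)^{h-1} × (0,∞), is a bijection whose inverse has Jacobian determinant (in absolute value) equal to S^{h-1} · ∏_{i=1}^{h-1} W_i^{i-1}. -/

import Mathlib

/-- Extend a vector `w : Fin h → ℝ` to `ℕ`, by zero outside the range. -/
def ext (h : ℕ) (w : Fin h → ℝ) (k : ℕ) : ℝ := if hk : k < h then w ⟨k, hk⟩ else 0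

/-- The change of variables `(x_1, ..., x_h) ↦ (W_1, ..., W_{h-1}, S)`, where
`W_i = (∑_{j≤i} x_j)/(∑_{j≤i+1} x_j)` (stored in coordinates `0, ..., h-2`) and
`S = ∑_{j=1}^h x_j` (stored in coordinate `h-1`). -/
noncomputable def fwdMap (h : ℕ) (x : Fin h → ℝ) : Fin h → ℝ := fun i =>
  if (i : ℕ) < h - 1 then
    (∑ j ∈ Finset.range ((i : ℕ) + 1), ext h x j)
      / (∑ j ∈ Finset.range ((i : ℕ) + 2), ext h x j)
  else ∑ j ∈ Finset.range h, ext h x j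

/-- The inverse of the change of variables: the input `w` has coordinates
`W_1, ..., W_{h-1}, S`, and the output is `x_i = (1 - W_{i-1}) (∏_{k=i}^{h-1} W_k) S`
(with `W_0 = 0`), for `i = 1, ..., h`. -/
noncomputable def invMap (h : ℕ) (w : Fin h → ℝ) : Fin h → ℝ := fun i =>
  (1 - if (i : ℕ) = 0 then 0 else ext h w ((i : ℕ) - 1))
    * (∏ m ∈ Finset.Icc ((i : ℕ) + 1) (h - 1), ext h w (m - 1)) * ext h w (h - 1)

/-!
Index coordinates from `0` and let `T_i = W_{i+1} ⋯ W_{h-1} S` be the product of the coordinates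
`i, …, h-1` of `w`. The inverse map is `x_i = T_i - T_{i-1}`, so the partial sums
`x_0 + ⋯ + x_i` of its output are the tail products `T_i`; conversely the tail products of the
forward image telescope back to the partial sums. This makes the two maps mutually inverse.

For the Jacobian, compose the inverse map with the prefix-sum map, which is linear and lower
unitriangular: the result is the tail-product map `w ↦ (∏_{m ≥ i} w_m)_i`. Its Jacobian is upper
triangular with diagonal entries `∏_{m > i} w_m`, so the determinant is `∏_k w_k ^ k`.
-/

open Finset

lemma Finset.prod_Ico_div_succ_of_ne_zero {G : Type*} [CommGroupWithZero G] {f : ℕ → G}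
    (hf : ∀ k, f k ≠ 0) {m n : ℕ} (hmn : m ≤ n) :
    ∏ i ∈ Ico m n, f i / f (i + 1) = f m / f n := by
  have := congrArg Units.val (prod_Ico_div (f := fun k => (Units.mk0 (f k) (hf k))⁻¹) hmn)
  simpa [div_eq_mul_inv, mul_comm] using this

lemma Finset.prod_Ico_eq_prod_Ico_pred_mul {M : Type*} [CommMonoid M] (f : ℕ → M) {m n : ℕ}
    (hmn : m < n) : ∏ i ∈ Ico m n, f i = (∏ i ∈ Ico m (n - 1), f i) * f (n - 1) := by
  obtain ⟨n, rfl⟩ : ∃ k, n = k + 1 := ⟨n - 1, by omega⟩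
  exact prod_Ico_succ_top (by omega) f

section TriangularJacobian

variable {ι : Type*} [Fintype ι] [LinearOrder ι]

noncomputable def prefixSumCLM : (ι → ℝ) →L[ℝ] (ι → ℝ) :=
  LinearMap.toContinuousLinearMap
    (Matrix.toLin' (Matrix.of fun i j : ι => if j ≤ i then (1 : ℝ) else 0))

lemma prefixSumCLM_apply (y : ι → ℝ) (i : ι) :
    prefixSumCLM y i = ∑ j with j ≤ i, y j := by
  simp [prefixSumCLM, Matrix.mulVec, dotProduct, ite_mul, Finset.sum_filter]

lemma det_prefixSumCLM : (prefixSumCLM : (ι → ℝ) →L[ℝ] (ι → ℝ)).det = 1 := by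
  rw [ContinuousLinearMap.det, prefixSumCLM, LinearMap.coe_toContinuousLinearMap,
    LinearMap.det_toLin', Matrix.det_of_isLowerTriangular _ fun i j hij => ?_]
  · simp
  · simp [not_le.mpr (OrderDual.toDual_lt_toDual.mp hij)]

def suffixProd (w : ι → ℝ) (i : ι) : ℝ := ∏ m with i ≤ m, w m

lemma hasFDerivAt_suffixProd (w : ι → ℝ) :
    HasFDerivAt suffixProd (ContinuousLinearMap.pi fun i =>
      ∑ m with i ≤ m, (∏ k ∈ ({m | i ≤ m} : Finset ι).erase m, w k) •
        ContinuousLinearMap.proj (R := ℝ) (φ := fun _ : ι => ℝ) m) w :=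
  hasFDerivAt_pi.2 fun _ => hasFDerivAt_finsetProd

lemma toMatrix'_fderiv_suffixProd (w : ι → ℝ) (i j : ι) :
    LinearMap.toMatrix' (fderiv ℝ suffixProd w : (ι → ℝ) →ₗ[ℝ] ι → ℝ) i j =
      if i ≤ j then ∏ k ∈ ({m | i ≤ m} : Finset ι).erase j, w k else 0 := by
  rw [(hasFDerivAt_suffixProd w).fderiv, LinearMap.toMatrix'_apply]
  simp [Pi.single_apply]

lemma det_fderiv_suffixProd (w : ι → ℝ) :
    (fderiv ℝ suffixProd w).det = ∏ k, w k ^ #{p | p < k} := by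
  rw [ContinuousLinearMap.det, ← LinearMap.det_toMatrix',
    Matrix.det_of_isUpperTriangular fun i j hij => ?_]
  · have hdiag (i : ι) : ({m | i ≤ m} : Finset ι).erase i = ({m | i < m} : Finset ι) := by
      ext
      simp [lt_iff_le_and_ne, ne_comm, and_comm]
    simp only [toMatrix'_fderiv_suffixProd, le_refl, if_true, hdiag]
    rw [Finset.prod_comm' (t' := univ) (s' := fun k => {p | p < k}) (by simp)]
    simp only [prod_const]
  · rw [toMatrix'_fderiv_suffixProd, if_neg (not_le.mpr (show j < i from hij))]

end TriangularJacobian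

namespace ChangeOfVariables

variable {h : ℕ}

lemma ext_of_lt (w : Fin h → ℝ) {k : ℕ} (hk : k < h) : ext h w k = w ⟨k, hk⟩ := dif_pos hk

lemma sum_filter_fin (f : Fin h → ℝ) (p : ℕ → Prop) [DecidablePred p] :
    ∑ j ∈ univ.filter (fun j : Fin h => p j), f j = ∑ j ∈ (range h).filter p, ext h f j := by
  rw [sum_filter, sum_filter, ← Fin.sum_univ_eq_sum_range]
  simp [ext_of_lt]

lemma prod_filter_fin (f : Fin h → ℝ) (p : ℕ → Prop) [DecidablePred p] :
    ∏ j ∈ univ.filter (fun j : Fin h => p j), f j = ∏ j ∈ (range h).filter p, ext h f j := by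
  rw [prod_filter, prod_filter, ← Fin.prod_univ_eq_prod_range]
  simp [ext_of_lt]

noncomputable def partialSum (h : ℕ) (x : Fin h → ℝ) (k : ℕ) : ℝ := ∑ j ∈ range k, ext h x j

noncomputable def tailProd (h : ℕ) (w : Fin h → ℝ) (i : ℕ) : ℝ := ∏ m ∈ Ico i h, ext h w m

lemma ext_nonneg {x : Fin h → ℝ} (hx : ∀ i, 0 < x i) (k : ℕ) : 0 ≤ ext h x k := by
  unfold _root_.ext
  exact dite_nonneg (fun _ => (hx _).le) fun _ => le_rfl

lemma partialSum_succ_pos {x : Fin h → ℝ} (hx : ∀ i, 0 < x i) (hh : 0 < h) (k : ℕ) :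
    0 < partialSum h x (k + 1) :=
  calc 0 < ext h x 0 := by rw [ext_of_lt x hh]; exact hx _
    _ ≤ partialSum h x (k + 1) :=
      single_le_sum (fun j _ => ext_nonneg hx j) (mem_range.2 k.succ_pos)

lemma partialSum_lt_succ {x : Fin h → ℝ} (hx : ∀ i, 0 < x i) {k : ℕ} (hk : k < h) :
    partialSum h x k < partialSum h x (k + 1) := by
  rw [partialSum, partialSum, sum_range_succ, ext_of_lt x hk]
  linarith [hx ⟨k, hk⟩]

lemma fwdMap_apply (x : Fin h → ℝ) (i : Fin h) :
    fwdMap h x i = if (i : ℕ) < h - 1 then partialSum h x (i + 1) / partialSum h x (i + 2)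
      else partialSum h x h := rfl

lemma ext_fwdMap_of_lt (x : Fin h → ℝ) {m : ℕ} (hm : m < h - 1) :
    ext h (fwdMap h x) m = partialSum h x (m + 1) / partialSum h x (m + 2) := by
  rw [ext_of_lt _ (by omega), fwdMap_apply, if_pos hm]

lemma ext_fwdMap_last (x : Fin h → ℝ) (hh : 0 < h) :
    ext h (fwdMap h x) (h - 1) = partialSum h x h := by
  rw [ext_of_lt _ (by omega), fwdMap_apply, if_neg (by simp)]

lemma tailProd_eq_mul (w : Fin h → ℝ) {i : ℕ} (hi : i < h) :
    tailProd h w i = ext h w i * tailProd h w (i + 1) :=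
  prod_eq_prod_Ico_succ_bot hi _

lemma tailProd_pos {w : Fin h → ℝ} (hw : ∀ i, 0 < w i) (i : ℕ) : 0 < tailProd h w i :=
  prod_pos fun m hm => by rw [ext_of_lt w (mem_Ico.1 hm).2]; exact hw _

lemma invMap_eq_mul (w : Fin h → ℝ) (i : Fin h) :
    invMap h w i = (1 - if (i : ℕ) = 0 then 0 else ext h w (i - 1)) * tailProd h w i := by
  rw [invMap, mul_assoc, tailProd, prod_Ico_eq_prod_Ico_pred_mul _ i.isLt,
    ← Ico_add_one_right_eq_Icc, ← prod_Ico_add' (fun m => ext h w (m - 1)) _ _ 1]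
  simp only [Nat.add_sub_cancel]

lemma invMap_eq_sub (w : Fin h → ℝ) (i : Fin h) :
    invMap h w i = tailProd h w i - if (i : ℕ) = 0 then 0 else tailProd h w (i - 1) := by
  rw [invMap_eq_mul]
  split_ifs with hi
  · ring
  · rw [tailProd_eq_mul w (by omega : (i : ℕ) - 1 < h), Nat.sub_add_cancel (by omega)]
    ring

lemma partialSum_invMap (w : Fin h → ℝ) {k : ℕ} (hk : k < h) :
    partialSum h (invMap h w) (k + 1) = tailProd h w k := by
  induction k with
  | zero => simp [partialSum, ext_of_lt _ hk, invMap_eq_sub]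
  | succ k ih =>
    rw [partialSum, sum_range_succ, ← partialSum, ih (by omega), ext_of_lt _ hk, invMap_eq_sub]
    simp

lemma tailProd_fwdMap {x : Fin h → ℝ} (hx : ∀ i, 0 < x i) {i : ℕ} (hi : i < h) :
    tailProd h (fwdMap h x) i = partialSum h x (i + 1) := by
  have hP : ∀ k, partialSum h x (k + 1) ≠ 0 := fun k => (partialSum_succ_pos hx (by omega) k).ne'
  rw [tailProd, prod_Ico_eq_prod_Ico_pred_mul _ hi, ext_fwdMap_last x (by omega),
    prod_congr rfl fun m hm => ext_fwdMap_of_lt x (mem_Ico.1 hm).2,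
    prod_Ico_div_succ_of_ne_zero (f := fun k => partialSum h x (k + 1)) hP (by omega)]
  have hPh := hP (h - 1)
  rw [Nat.sub_add_cancel (by omega)] at hPh ⊢
  exact div_mul_cancel₀ _ hPh

def targetSet (h : ℕ) : Set (Fin h → ℝ) :=
  {w | ∀ i : Fin h, ((i : ℕ) < h - 1 → w i ∈ Set.Ioo (0:ℝ) 1) ∧ ((i : ℕ) = h - 1 → 0 < w i)}

lemma pos_of_mem_targetSet {w : Fin h → ℝ} (hw : w ∈ targetSet h) (i : Fin h) : 0 < w i := by
  rcases lt_or_ge (i : ℕ) (h - 1) with hi | hi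
  · exact ((hw i).1 hi).1
  · exact (hw i).2 (by omega)

lemma mapsTo_fwdMap : Set.MapsTo (fwdMap h) {x | ∀ i, 0 < x i} (targetSet h) := by
  intro x hx i
  have hP := partialSum_succ_pos hx i.pos
  refine ⟨fun hi => ?_, fun hi => ?_⟩
  · have hlt : partialSum h x (i + 1) < partialSum h x (i + 2) := partialSum_lt_succ hx (by omega)
    rw [fwdMap_apply, if_pos hi]
    exact ⟨div_pos (hP _) (hP _), (div_lt_one (hP _)).2 hlt⟩
  · rw [fwdMap_apply, if_neg (by omega)]
    simpa [Nat.sub_add_cancel i.pos] using hP (h - 1)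

lemma mapsTo_invMap : Set.MapsTo (invMap h) (targetSet h) {x | ∀ i, 0 < x i} := by
  intro w hw i
  rw [invMap_eq_mul]
  refine mul_pos (sub_pos.2 ?_) (tailProd_pos (pos_of_mem_targetSet hw) _)
  split_ifs with hi
  · exact one_pos
  · rw [ext_of_lt w (by omega)]
    exact ((hw _).1 (by simp only; omega)).2

lemma invMap_fwdMap {x : Fin h → ℝ} (hx : ∀ i, 0 < x i) : invMap h (fwdMap h x) = x := by
  funext i
  rw [invMap_eq_sub, tailProd_fwdMap hx i.isLt, partialSum, sum_range_succ, ← partialSum,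
    ext_of_lt x i.isLt, Fin.eta]
  split_ifs with hi
  · simp [partialSum, hi]
  · rw [tailProd_fwdMap hx (by omega), Nat.sub_add_cancel (by omega)]
    ring

lemma fwdMap_invMap {w : Fin h → ℝ} (hw : w ∈ targetSet h) : fwdMap h (invMap h w) = w := by
  funext i
  rw [fwdMap_apply]
  split_ifs with hi
  · rw [partialSum_invMap w (by omega), partialSum_invMap w (by omega), tailProd_eq_mul w i.isLt,
      ext_of_lt w i.isLt, mul_div_cancel_right₀ _ (tailProd_pos (pos_of_mem_targetSet hw) _).ne']
  · have hi : (i : ℕ) = h - 1 := by omega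
    have htop := partialSum_invMap w (k := h - 1) (by omega)
    rw [tailProd_eq_mul w (by omega), Nat.sub_add_cancel i.pos, tailProd, Ico_self, prod_empty,
      mul_one, ext_of_lt w (by omega)] at htop
    rw [htop]
    simp [← hi]

lemma invOn_invMap_fwdMap :
    Set.InvOn (invMap h) (fwdMap h) {x | ∀ i, 0 < x i} (targetSet h) :=
  ⟨fun _ hx => invMap_fwdMap hx, fun _ hw => fwdMap_invMap hw⟩

lemma suffixProd_eq_tailProd (w : Fin h → ℝ) (i : Fin h) : suffixProd w i = tailProd h w i := by
  refine (prod_filter_fin w ((i : ℕ) ≤ ·)).trans (congrArg₂ _ ?_ rfl)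
  ext m
  simp [and_comm]

lemma prefixSumCLM_invMap (w : Fin h → ℝ) : prefixSumCLM (invMap h w) = suffixProd w := by
  funext i
  rw [prefixSumCLM_apply, suffixProd_eq_tailProd, ← partialSum_invMap w i.isLt, partialSum]
  refine (sum_filter_fin (invMap h w) (· ≤ (i : ℕ))).trans (congrArg₂ _ ?_ rfl)
  ext m
  simp only [mem_filter, mem_range, Order.lt_add_one_iff, and_iff_right_iff_imp]
  omega

@[fun_prop]
lemma differentiable_ext (k : ℕ) : Differentiable ℝ fun w : Fin h → ℝ => ext h w k := by
  unfold _root_.ext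
  split_ifs
  exacts [differentiable_apply _, differentiable_const _]

lemma differentiable_invMap : Differentiable ℝ (invMap h) := by
  have hprod (s : Finset ℕ) : Differentiable ℝ fun w : Fin h → ℝ => ∏ m ∈ s, ext h w (m - 1) :=
    fun w => (HasFDerivAt.finsetProd fun m _ =>
      (differentiable_ext (m - 1) w).hasFDerivAt).differentiableAt
  refine differentiable_pi.2 fun i => ?_
  simp only [invMap]
  split_ifs <;> fun_prop

lemma det_fderiv_invMap (w : Fin h → ℝ) :
    (fderiv ℝ (invMap h) w).det = ∏ k : Fin h, w k ^ (k : ℕ) := by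
  have hcomp : prefixSumCLM.comp (fderiv ℝ (invMap h) w) = fderiv ℝ suffixProd w := by
    rw [← funext prefixSumCLM_invMap]
    exact (prefixSumCLM.hasFDerivAt.comp w (differentiable_invMap w).hasFDerivAt).fderiv.symm
  have hdet : (prefixSumCLM : (Fin h → ℝ) →L[ℝ] _).det * (fderiv ℝ (invMap h) w).det =
      ∏ k, w k ^ #{p | p < k} := by
    rw [← det_fderiv_suffixProd, ← hcomp]
    exact (LinearMap.det_comp _ _).symm
  rw [det_prefixSumCLM, one_mul] at hdet
  rw [hdet]
  simp [filter_gt_eq_Iio]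

lemma prod_pow_val_eq (w : Fin h → ℝ) :
    ∏ k : Fin h, w k ^ (k : ℕ)
      = ext h w (h - 1) ^ (h - 1) * ∏ i ∈ Icc 1 (h - 1), ext h w (i - 1) ^ (i - 1) := by
  rcases h with _ | n
  · simp
  have hext : ∏ k : Fin (n + 1), w k ^ (k : ℕ) = ∏ k ∈ range (n + 1), ext (n + 1) w k ^ k := by
    rw [← Fin.prod_univ_eq_prod_range]
    exact prod_congr rfl fun k _ => by rw [ext_of_lt w k.isLt]
  rw [hext, prod_range_succ, mul_comm, Nat.add_sub_cancel, ← Ico_add_one_right_eq_Icc]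
  congr 1
  simpa using prod_Ico_add' (fun i => ext (n + 1) w (i - 1) ^ (i - 1)) 0 n 1

lemma abs_det_fderiv_invMap {w : Fin h → ℝ} (hw : w ∈ targetSet h) :
    |(fderiv ℝ (invMap h) w).det|
      = ext h w (h - 1) ^ (h - 1) * ∏ i ∈ Icc 1 (h - 1), ext h w (i - 1) ^ (i - 1) := by
  rw [det_fderiv_invMap, abs_of_pos (prod_pos fun k _ => pow_pos (pos_of_mem_targetSet hw k) _),
    prod_pow_val_eq]

end ChangeOfVariables

theorem stmt8_general (h : ℕ) :
    Set.BijOn (fwdMap h)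
      {x : Fin h → ℝ | ∀ i, 0 < x i}
      {w : Fin h → ℝ | ∀ i : Fin h,
        ((i : ℕ) < h - 1 → w i ∈ Set.Ioo (0:ℝ) 1) ∧ ((i : ℕ) = h - 1 → 0 < w i)}
    ∧ Set.InvOn (invMap h) (fwdMap h)
        {x : Fin h → ℝ | ∀ i, 0 < x i}
        {w : Fin h → ℝ | ∀ i : Fin h,
          ((i : ℕ) < h - 1 → w i ∈ Set.Ioo (0:ℝ) 1) ∧ ((i : ℕ) = h - 1 → 0 < w i)}
    ∧ (∀ w : Fin h → ℝ,
        (∀ i : Fin h, ((i : ℕ) < h - 1 → w i ∈ Set.Ioo (0:ℝ) 1)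
          ∧ ((i : ℕ) = h - 1 → 0 < w i)) →
        |(fderiv ℝ (invMap h) w).det|
          = ext h w (h - 1) ^ (h - 1)
            * ∏ i ∈ Finset.Icc 1 (h - 1), ext h w (i - 1) ^ (i - 1)) := by
  open ChangeOfVariables in
  exact ⟨invOn_invMap_fwdMap.bijOn mapsTo_fwdMap mapsTo_invMap, invOn_invMap_fwdMap,
    fun _ hw => abs_det_fderiv_invMap hw⟩

/-- The change of variables `(x_1, ..., x_h) ↦ (W_1, ..., W_{h-1}, S)` maps `(0,∞)^h`
bijectively to `(0,1)^{h-1} × (0,∞)`, with inverse `invMap`, and the inverse has Jacobian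
determinant (in absolute value) `S^{h-1} ∏_{i=1}^{h-1} W_i^{i-1}`. -/
theorem stmt8 (h : ℕ) (hh : 2 ≤ h) :
    Set.BijOn (fwdMap h)
      {x : Fin h → ℝ | ∀ i, 0 < x i}
      {w : Fin h → ℝ | ∀ i : Fin h,
        ((i : ℕ) < h - 1 → w i ∈ Set.Ioo (0:ℝ) 1) ∧ ((i : ℕ) = h - 1 → 0 < w i)}
    ∧ Set.InvOn (invMap h) (fwdMap h)
        {x : Fin h → ℝ | ∀ i, 0 < x i}
        {w : Fin h → ℝ | ∀ i : Fin h,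
          ((i : ℕ) < h - 1 → w i ∈ Set.Ioo (0:ℝ) 1) ∧ ((i : ℕ) = h - 1 → 0 < w i)}
    ∧ (∀ w : Fin h → ℝ,
        (∀ i : Fin h, ((i : ℕ) < h - 1 → w i ∈ Set.Ioo (0:ℝ) 1)
          ∧ ((i : ℕ) = h - 1 → 0 < w i)) →
        |(fderiv ℝ (invMap h) w).det|
          = ext h w (h - 1) ^ (h - 1)
            * ∏ i ∈ Finset.Icc 1 (h - 1), ext h w (i - 1) ^ (i - 1)) :=
  stmt8_general h
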